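/- arXiv:1702.08170 — 8 statements merged into one kernel-verified Lean document; each statement's English description precedes it below -/
import Mathlib

section
/- Let M be a matroid with basis B. Then for any two subsets U, V of B, the intersection of the closures of U and V equals the closure of U ∩ V, i.e., cl(U) ∩ cl(V) = cl(U ∩ V). -/
theorem closure_inter_closure_of_subset_base {α : Type*} (M : Matroid α)
    (B : Set α) (hB : M.IsBase B) (U V : Set α) (hU : U ⊆ B) (hV : V ⊆ B) :
    M.closure U ∩ M.closure V = M.closure (U ∩ V) :=
  (hB.indep.subset (Set.union_subset hU hV)).closure_inter_eq_inter_closure.symm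
end

section
/- Let M be a matroid of finite rank m and let S be a finite sequence (multiset, repetitions allowed) of elements of the ground set of M with |S| > m(r-1), where r ≥ 1. Then S can be partitioned into r pairwise disjoint subsequences S_1, …, S_r such that cl(∅) ⊊ cl(S_1) ⊆ cl(S_2) ⊆ … ⊆ cl(S_r). -/
/-!
Build the parts from the last one down. A basis of the values of `S` on the remaining indices,
pulled back injectively to indices, gives at most `m` indices spanning all the remaining values;
they form the next part, whose closure therefore contains the closure of every later-chosen part.
Removing them leaves more than `m` times the number of parts still to be chosen, so after `r - 1`
steps the first part is nonempty, and any element of it is a non-loop.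
-/

open Set Function

namespace Fin

variable {n : ℕ} {β : Type*}

lemma monotone_snoc [Preorder β] {f : Fin n → β} {x : β} (hf : Monotone f) (hx : ∀ i, f i ≤ x) :
    Monotone (snoc f x : Fin (n + 1) → β) := by
  intro i j hij
  induction j using lastCases with
  | last => induction i using lastCases <;> simp [hx]
  | cast j =>
    induction i using lastCases with
    | last => exact absurd hij (castSucc_lt_last j).not_ge
    | cast i => simpa using hf (castSucc_le_castSucc_iff.mp hij)

lemma pairwise_disjoint_snoc [PartialOrder β] [OrderBot β] {f : Fin n → β} {x : β}
    (hf : Pairwise (Disjoint on f)) (hx : ∀ i, Disjoint (f i) x) :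
    Pairwise (Disjoint on (snoc f x : Fin (n + 1) → β)) := by
  intro i j hij
  induction j using lastCases with
  | last =>
    induction i using lastCases with
    | last => exact absurd rfl hij
    | cast i => simpa [onFun] using hx i
  | cast j =>
    induction i using lastCases with
    | last => simpa [onFun] using (hx j).symm
    | cast i => simpa [onFun] using hf (fun h => hij (congrArg castSucc h))

end Fin

namespace Matroid

variable {α ι : Type*} {M : Matroid α}

lemma closure_empty_ssubset_closure_of_mem {X : Set α} {e : α} (heX : e ∈ X) (heE : e ∈ M.E)
    (he : e ∉ M.closure ∅) : M.closure ∅ ⊂ M.closure X :=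
  ssubset_of_subset_not_subset (M.closure_mono (empty_subset X))
    fun h => he (h (M.mem_closure_of_mem' heX heE))

lemma exists_subset_card_le_closure_image_eq {m : ℕ} (hm : M.eRank = m) (S : ι → α)
    (K : Finset ι) : ∃ T ⊆ K, T.card ≤ m ∧ M.closure (S '' T) = M.closure (S '' K) := by
  classical
  obtain ⟨I, hI⟩ := M.exists_isBasis' (S '' K)
  have hIm : I.encard ≤ m := hm ▸ hI.indep.encard_le_eRank
  have hIfin : I.Finite := finite_of_encard_le_coe hIm
  obtain ⟨T, hTK, hinj, hTI⟩ := Finset.exists_subset_injOn_image_eq_of_surjOn (K : Set ι)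
    hIfin.toFinset fun x hx => hI.subset (by simpa using hx)
  have hST : S '' T = I := by rw [← Finset.coe_image, hTI, hIfin.coe_toFinset]
  refine ⟨T, by exact_mod_cast hTK, ?_, by rw [hST, hI.closure_eq_closure]⟩
  rw [← Finset.card_image_of_injOn hinj, hTI, ← ncard_eq_toFinset_card I hIfin]
  exact ENat.natCast_le_natCast.mp (hIfin.cast_ncard_eq ▸ hIm)

lemma exists_pairwise_disjoint_monotone_closure [DecidableEq ι] {m : ℕ} (hm : M.eRank = m)
    (S : ι → α) (r : ℕ) (K : Finset ι) (hK : m * r < K.card) :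
    ∃ J : Fin (r + 1) → Finset ι, (∀ k, J k ⊆ K) ∧ Pairwise (Disjoint on J) ∧
      (J 0).Nonempty ∧ Monotone fun k => M.closure (S '' J k) := by
  induction r generalizing K with
  | zero =>
    exact ⟨fun _ => K, fun _ => subset_rfl,
      fun i j hij => (hij (Subsingleton.elim (α := Fin 1) i j)).elim,
      Finset.card_pos.mp (by omega), fun _ _ _ => subset_rfl⟩
  | succ r ih =>
    obtain ⟨T, hTK, hTm, hTcl⟩ := exists_subset_card_le_closure_image_eq hm S K
    have hrest : m * r < (K \ T).card := by
      rw [Finset.card_sdiff_of_subset hTK]; rw [Nat.mul_succ] at hK; omega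
    obtain ⟨J, hJK, hJdisj, hJ0, hJmono⟩ := ih (K \ T) hrest
    refine ⟨Fin.snoc (α := fun _ => Finset ι) J T, fun k => ?_, ?_, by simpa using hJ0, ?_⟩
    · induction k using Fin.lastCases <;> simp [hTK, (hJK _).trans Finset.sdiff_subset]
    · exact Fin.pairwise_disjoint_snoc hJdisj fun k =>
        Finset.disjoint_of_subset_left (hJK k) Finset.sdiff_disjoint
    · change Monotone ((fun X : Finset ι => M.closure (S '' X)) ∘ Fin.snoc J T)
      rw [Fin.comp_snoc]
      refine Fin.monotone_snoc hJmono fun k => hTcl ▸ M.closure_subset_closure (image_mono ?_)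
      exact_mod_cast (hJK k).trans Finset.sdiff_subset

end Matroid

/-- Matroidal Tverberg: a sequence of length `> m (r-1)` in a matroid of finite rank `m`
can be split into `r` pairwise disjoint subsequences with nested closures, the first
one having closure strictly larger than the closure of the empty set. -/
theorem matroidal_tverberg {α ι : Type*} [Fintype ι] [DecidableEq ι]
    (M : Matroid α) (m r : ℕ) (hr : 1 ≤ r)
    (B : Set α) (hB : M.IsBase B) (hBfin : B.Finite) (hBm : B.ncard = m)
    (S : ι → α) (hS : ∀ i, S i ∈ M.E) (hS' : ∀ i, S i ∉ M.closure ∅)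
    (hlen : Fintype.card ι > m * (r - 1)) :
    ∃ J : Fin r → Finset ι,
      (∀ i j, i ≠ j → Disjoint (J i) (J j)) ∧
      M.closure ∅ ⊂ M.closure (S '' (J ⟨0, hr⟩ : Set ι)) ∧
      (∀ i j : Fin r, i ≤ j →
        M.closure (S '' (J i : Set ι)) ⊆ M.closure (S '' (J j : Set ι))) := by
  have hm : M.eRank = m := by rw [← hB.encard_eq_eRank, ← hBfin.cast_ncard_eq, hBm]
  obtain ⟨r, rfl⟩ : ∃ k, r = k + 1 := ⟨r - 1, by omega⟩
  obtain ⟨J, -, hdisj, ⟨i, hi⟩, hmono⟩ :=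
    M.exists_pairwise_disjoint_monotone_closure hm S r Finset.univ (by simpa using hlen)
  refine ⟨J, hdisj, ?_, fun _ _ hle => hmono hle⟩
  exact M.closure_empty_ssubset_closure_of_mem (mem_image_of_mem S hi) (hS i) (hS' i)
end

section
/- Let M be a matroid of finite rank m and let S be a finite sequence of non-loop elements of M with |S| > m(r-1). Then there exist r pairwise disjoint subsequences S_1, …, S_r of S with ⋂_{i=1}^r cl(S_i) ≠ cl(∅); in particular the intersection of the closures contains a non-loop element. -/
/-!
Repeatedly remove a basis of the remaining elements. Each basis has at most `m` elements, so
after `r - 1` rounds some element `e` is left; it is a non-loop, and it lies in the closure of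
every removed basis, since that basis spans everything that remained when it was removed.
The singleton `{e}` is the last part. Pulling `M` back along `S` (`Matroid.comap`) turns the
sequence into a set of indices.
-/

open Function

lemma Fin.pairwise_cons {β : Type*} {R : β → β → Prop} [Std.Symm R] {n : ℕ} {x : β}
    {f : Fin n → β} (hx : ∀ k, R x (f k)) (hf : Pairwise (R on f)) :
    Pairwise (R on (Fin.cons x f : Fin (n + 1) → β)) := by
  intro i j hij
  cases i using Fin.cases <;> cases j using Fin.cases
  · exact absurd rfl hij
  · exact hx _
  · exact symm (hx _)
  · exact hf (by simpa using hij)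

namespace Matroid

variable {α β : Type*} {M : Matroid α}

lemma eRank_comap_le (M : Matroid β) (f : α → β) : (M.comap f).eRank ≤ M.eRank := by
  obtain ⟨B, hB⟩ := (M.comap f).exists_isBase
  obtain ⟨hBi, hinj⟩ := comap_indep_iff.1 hB.indep
  rw [← hB.encard_eq_eRank, ← hinj.encard_image]
  exact hBi.encard_le_eRank

lemma exists_subset_encard_le_eRank_closure_eq (M : Matroid α) (T : Finset α) :
    ∃ J ⊆ T, (J : Set α).encard ≤ M.eRank ∧ M.closure J = M.closure T := by
  obtain ⟨I, hI⟩ := M.exists_isBasis' (T : Set α)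
  have hIfin : I.Finite := T.finite_toSet.subset hI.subset
  refine ⟨hIfin.toFinset, by simpa using hI.subset, by simpa using hI.indep.encard_le_eRank, ?_⟩
  simpa using hI.closure_eq_closure

theorem exists_pairwise_disjoint_mem_closure {m : ℕ} (hM : M.eRank ≤ m) {r : ℕ}
    {T : Finset α} (hT : ∀ x ∈ T, M.IsNonloop x) (hcard : m * r < T.card) :
    ∃ J : Fin (r + 1) → Finset α, (∀ k, J k ⊆ T) ∧ Pairwise (Disjoint on J) ∧
      ∃ e ∈ T, ∀ k, e ∈ M.closure (J k) := by
  classical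
  induction r generalizing T with
  | zero =>
    obtain ⟨x, hx⟩ := Finset.card_pos.mp hcard
    refine ⟨fun _ => {x}, by simpa, Subsingleton.pairwise (α := Fin 1), x, hx,
      fun _ => by simpa using M.mem_closure_self x (hT x hx).mem_ground⟩
  | succ r ih =>
    obtain ⟨J₀, hJ₀T, hJ₀card, hJ₀cl⟩ := M.exists_subset_encard_le_eRank_closure_eq T
    have hJ₀m : J₀.card ≤ m := by
      exact_mod_cast (Set.encard_coe_eq_coe_finsetCard J₀).symm.trans_le (hJ₀card.trans hM)
    have hrest : m * r < (T \ J₀).card := by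
      rw [Finset.card_sdiff_of_subset hJ₀T]
      rw [Nat.mul_succ] at hcard
      omega
    obtain ⟨J, hJT, hJ, e, he, heJ⟩ := ih (fun x hx => hT x (Finset.sdiff_subset hx)) hrest
    have heT : e ∈ T := Finset.sdiff_subset he
    refine ⟨Fin.cons J₀ J, Fin.cases hJ₀T fun k => (hJT k).trans Finset.sdiff_subset,
      Fin.pairwise_cons (fun k => Finset.disjoint_of_subset_right (hJT k)
        Finset.disjoint_sdiff) hJ, e, heT, Fin.cases ?_ heJ⟩
    rw [Fin.cons_zero, hJ₀cl]
    exact M.mem_closure_of_mem' heT (hT e heT).mem_ground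

end Matroid

theorem matroidal_tverberg_inter_general {α ι : Type*} [Fintype ι]
    (M : Matroid α) (m r : ℕ) (hr : 1 ≤ r)
    (B : Set α) (hB : M.IsBase B) (hBfin : B.Finite) (hBm : B.ncard = m)
    (S : ι → α) (hS : ∀ i, S i ∈ M.E) (hS' : ∀ i, S i ∉ M.closure ∅)
    (hlen : Fintype.card ι > m * (r - 1)) :
    ∃ J : Fin r → Finset ι,
      (∀ i j, i ≠ j → Disjoint (J i) (J j)) ∧
      (⋂ i : Fin r, M.closure (S '' (J i : Set ι))) ≠ M.closure ∅ := by
  obtain ⟨r, rfl⟩ : ∃ k, r = k + 1 := ⟨r - 1, by omega⟩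
  have hrank : (M.comap S).eRank ≤ m := by
    rw [← hBm, hBfin.cast_ncard_eq, hB.encard_eq_eRank]
    exact M.eRank_comap_le S
  have hnonloop : ∀ i ∈ (Finset.univ : Finset ι), (M.comap S).IsNonloop i := fun i _ =>
    Matroid.comap_isNonloop_iff.2 ⟨hS' i, hS i⟩
  obtain ⟨J, -, hJ, e, -, heJ⟩ :=
    Matroid.exists_pairwise_disjoint_mem_closure hrank hnonloop (by simpa using hlen)
  refine ⟨J, fun i j hij => hJ hij, fun h => hS' e ?_⟩
  rw [← h, Set.mem_iInter]
  simpa using heJ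

/-- Matroidal Tverberg, weak form: there are `r` pairwise disjoint subsequences
whose closures have intersection different from the closure of the empty set. -/
theorem matroidal_tverberg_inter {α ι : Type*} [Fintype ι] [DecidableEq ι]
    (M : Matroid α) (m r : ℕ) (hr : 1 ≤ r)
    (B : Set α) (hB : M.IsBase B) (hBfin : B.Finite) (hBm : B.ncard = m)
    (S : ι → α) (hS : ∀ i, S i ∈ M.E) (hS' : ∀ i, S i ∉ M.closure ∅)
    (hlen : Fintype.card ι > m * (r - 1)) :
    ∃ J : Fin r → Finset ι,
      (∀ i j, i ≠ j → Disjoint (J i) (J j)) ∧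
      (⋂ i : Fin r, M.closure (S '' (J i : Set ι))) ≠ M.closure ∅ :=
  matroidal_tverberg_inter_general M m r hr B hB hBfin hBm S hS hS' hlen
end

section
/- Let S be a finite sequence of points in a d-dimensional real affine space (or ℝ^d) with |S| > (d+1)(r-1). Then there exist r pairwise disjoint subsequences S_1, …, S_r of S such that ∅ ≠ aff(S_1) ⊆ aff(S_2) ⊆ … ⊆ aff(S_r); in particular ⋂_{i=1}^r aff(S_i) ≠ ∅. -/
/-!
Peel the points greedily. Every finite family has a subfamily of at most `d + 1` members with the
same affine hull (an affinely independent spanning one), so removing such a layer from the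
remaining points, over and over, produces disjoint layers whose affine hulls shrink from one
layer to the next. After `r - 1` rounds at most `(d + 1)(r - 1)` points have been removed, so the
`r`-th layer is still nonempty; listing the first `r` layers in reverse order gives the
subsequences.
-/

open Finset Function Module

section

variable {k V P ι : Type*} [DivisionRing k] [AddCommGroup V] [Module k V] [AddTorsor V P]
  [FiniteDimensional k V]

theorem Finset.exists_subset_card_le_finrank_add_one_affineSpan_image_eq (S : ι → P)
    (A : Finset ι) :
    ∃ B ⊆ A, #B ≤ finrank k V + 1 ∧ affineSpan k (S '' B) = affineSpan k (S '' A) := by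
  classical
  obtain ⟨t, htA, hspan, hind⟩ := exists_affineIndependent k V (S '' A)
  lift t to Finset P using (A.finite_toSet.image S).subset htA
  obtain ⟨B, hBA, hinj, hBt⟩ := exists_subset_injOn_image_eq_of_surjOn (A : Set ι) t htA
  refine ⟨B, mod_cast hBA, ?_, by rw [← hspan, ← hBt, coe_image]⟩
  calc #B = Fintype.card t := by rw [Fintype.card_coe, ← hBt, card_image_of_injOn hinj]
    _ ≤ finrank k (vectorSpan k (Set.range ((↑) : t → P))) + 1 := hind.card_le_finrank_succ
    _ ≤ finrank k V + 1 := by gcongr; exact Submodule.finrank_le _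

namespace AffineTverberg

variable (k) (S : ι → P) (A : Finset ι)

noncomputable def spanningLayer : Finset ι :=
  (A.exists_subset_card_le_finrank_add_one_affineSpan_image_eq (k := k) (V := V) S).choose

theorem spanningLayer_subset : spanningLayer k S A ⊆ A :=
  (A.exists_subset_card_le_finrank_add_one_affineSpan_image_eq S).choose_spec.1

theorem card_spanningLayer_le : #(spanningLayer k S A) ≤ finrank k V + 1 :=
  (A.exists_subset_card_le_finrank_add_one_affineSpan_image_eq S).choose_spec.2.1

theorem affineSpan_image_spanningLayer :
    affineSpan k (S '' spanningLayer k S A) = affineSpan k (S '' A) :=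
  (A.exists_subset_card_le_finrank_add_one_affineSpan_image_eq S).choose_spec.2.2

variable [DecidableEq ι]

noncomputable def remainder : ℕ → Finset ι
  | 0 => A
  | m + 1 => remainder m \ spanningLayer k S (remainder m)

noncomputable def layer (m : ℕ) : Finset ι :=
  spanningLayer k S (remainder k S A m)

theorem antitone_remainder : Antitone (remainder k S A) :=
  antitone_nat_of_succ_le fun _ => sdiff_subset

theorem pairwise_disjoint_layer : Pairwise (Disjoint on layer k S A) := by
  refine (pairwise_disjoint_on _).2 fun m n hmn => ?_
  have hn : layer k S A n ⊆ remainder k S A m \ layer k S A m :=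
    (spanningLayer_subset k S _).trans (antitone_remainder k S A hmn)
  exact disjoint_sdiff.mono_right hn

theorem antitone_affineSpan_image_layer :
    Antitone fun m => affineSpan k (S '' layer k S A m) := by
  intro m n hmn
  simp only [layer, affineSpan_image_spanningLayer]
  exact affineSpan_mono k (Set.image_mono (mod_cast antitone_remainder k S A hmn))

theorem card_le_card_remainder_add (m : ℕ) :
    #A ≤ #(remainder k S A m) + (finrank k V + 1) * m := by
  induction m with
  | zero => simp [remainder]
  | succ m ih =>
    have hsplit := card_sdiff_add_card_eq_card (spanningLayer_subset k S (remainder k S A m))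
    have hlayer := card_spanningLayer_le k S (remainder k S A m)
    simp only [remainder]
    lia

theorem layer_nonempty {m : ℕ} (hm : (finrank k V + 1) * m < #A) : (layer k S A m).Nonempty := by
  have hrem : (remainder k S A m).Nonempty := card_pos.1 (by
    have := card_le_card_remainder_add k S A m
    lia)
  have himage : (S '' layer k S A m).Nonempty := by
    rw [← affineSpan_nonempty k, layer, affineSpan_image_spanningLayer, affineSpan_nonempty]
    exact (coe_nonempty.2 hrem).image S
  exact coe_nonempty.1 himage.of_image

end AffineTverberg

end

open AffineTverberg in
/-- Tverberg for affine hulls in `ℝ^d`: a sequence of more than `(d+1)(r-1)` points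
admits `r` pairwise disjoint subsequences with nonempty nested affine hulls. -/
theorem affine_tverberg {ι : Type*} [Fintype ι] [DecidableEq ι]
    (d r : ℕ) (hr : 1 ≤ r) (S : ι → (Fin d → ℝ))
    (hlen : Fintype.card ι > (d + 1) * (r - 1)) :
    ∃ J : Fin r → Finset ι,
      (∀ i j, i ≠ j → Disjoint (J i) (J j)) ∧
      ((affineSpan ℝ (S '' (J ⟨0, hr⟩ : Set ι)) : Set (Fin d → ℝ)).Nonempty) ∧
      (∀ i j : Fin r, i ≤ j →
        affineSpan ℝ (S '' (J i : Set ι)) ≤ affineSpan ℝ (S '' (J j : Set ι))) := by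
  let J (i : Fin r) : Finset ι := layer ℝ S univ i.rev
  have hfirst : (J ⟨0, hr⟩).Nonempty := by
    apply layer_nonempty
    simpa [finrank_fin_fun] using hlen
  refine ⟨J, fun i j hij => ?_, ?_, fun i j hij => ?_⟩
  · exact pairwise_disjoint_layer ℝ S univ (Fin.val_injective.ne (Fin.rev_injective.ne hij))
  · exact (affineSpan_nonempty ℝ).2 ((coe_nonempty.2 hfirst).image S)
  · exact antitone_affineSpan_image_layer ℝ S univ (Fin.rev_le_rev.2 hij)
end

section
/- Let M be a matroid of finite rank m, r ≥ 1, and let S be a finite sequence of non-loops in M colored by exactly m colors 1, …, m such that color 1 is used on at least r elements and each color 2, …, m is used on at least r-1 elements. Then there exist r pairwise disjoint rainbow subsequences S_1, …, S_r of S with cl(∅) ⊊ cl(S_1) ⊆ cl(S_2) ⊆ … ⊆ cl(S_r). -/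
/-!
Induct on the number `p` of parts and, for fixed `p`, on the colour set `T`, keeping the
invariant: every colour of `T` occurs at least `p - 1` times in `X`, and either some colour
occurs `p` times and `r(X) ≤ |T|`, or `p ≥ 2` and `r(X) < |T|`. (For `T` all `m` colours and `X`
the whole sequence this is the hypothesis, since `r(X) ≤ m`.) Let `d = |T| - r(X)`. If some
`C ⊆ T` violates Rado's condition `|C| ≤ r(X_C) + d`, then `C ≠ T` and the invariant holds on
`X_C` with colours `C`. Otherwise Rado's theorem yields a rainbow independent `E ⊆ X` with
`|E| ≥ r(X)`, i.e. a rainbow basis of `X`. Removing it costs each colour at most one element; a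
colour missed by `E` keeps all of its elements, and if `E` meets every colour then
`r(X) = |T|`, so some colour occurs `p` times. Hence the invariant holds on `X \ E` for `p - 1`
parts, and `E`, whose closure contains `X`, becomes the last part. All of this takes place in
the matroid `M.comap S` on the index set.
-/

open Finset Function

namespace Matroid

variable {ι κ : Type*} {N : Matroid ι} {c : ι → κ}

structure IsRainbowFlag (N : Matroid ι) (c : ι → κ) (X : Finset ι) {n : ℕ}
    (J : Fin n → Finset ι) : Prop where
  subset : ∀ k, J k ⊆ X
  pairwise_disjoint : Pairwise (Disjoint on J)
  injOn : ∀ k, Set.InjOn c (J k)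
  monotone_closure : Monotone fun k ↦ N.closure (J k)

lemma isRainbowFlag_singleton {X : Finset ι} {x : ι} (hx : x ∈ X) :
    N.IsRainbowFlag c X (fun _ : Fin 1 ↦ {x}) where
  subset _ := singleton_subset_iff.2 hx
  pairwise_disjoint k l hkl := (hkl (Subsingleton.elim k l)).elim
  injOn _ := by simp
  monotone_closure := monotone_const

namespace IsRainbowFlag

variable {n : ℕ} {X Y E : Finset ι} {J : Fin n → Finset ι}

lemma mono (hJ : N.IsRainbowFlag c X J) (hXY : X ⊆ Y) : N.IsRainbowFlag c Y J where
  subset k := (hJ.subset k).trans hXY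
  pairwise_disjoint := hJ.pairwise_disjoint
  injOn := hJ.injOn
  monotone_closure := hJ.monotone_closure

lemma snoc [DecidableEq ι] (hJ : N.IsRainbowFlag c (X \ E) J) (hE : N.IsBasis' E X)
    (hEc : Set.InjOn c E) : N.IsRainbowFlag c X (Fin.snoc J E : Fin (n + 1) → Finset ι) := by
  have hEX : E ⊆ X := by exact_mod_cast hE.subset
  have hJE : ∀ k, Disjoint (J k) E := fun k ↦
    disjoint_of_subset_left (hJ.subset k) sdiff_disjoint
  refine ⟨fun k ↦ ?_, fun k l hkl ↦ ?_, fun k ↦ ?_, fun k l hkl ↦ ?_⟩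
  · induction k using Fin.lastCases with
    | last => simpa using hEX
    | cast k => simpa using (hJ.subset k).trans sdiff_subset
  · induction k using Fin.lastCases with
    | last =>
      induction l using Fin.lastCases with
      | last => exact absurd rfl hkl
      | cast l => simpa [onFun] using (hJE l).symm
    | cast k =>
      induction l using Fin.lastCases with
      | last => simpa [onFun] using hJE k
      | cast l => simpa [onFun] using hJ.pairwise_disjoint (ne_of_apply_ne Fin.castSucc hkl)
  · induction k using Fin.lastCases with
    | last => simpa using hEc
    | cast k => simpa using hJ.injOn k
  · induction l using Fin.lastCases with
    | last =>
      induction k using Fin.lastCases with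
      | last => exact subset_rfl
      | cast k =>
        simp only [Fin.snoc_castSucc, Fin.snoc_last]
        rw [hE.closure_eq_closure]
        exact N.closure_mono (by exact_mod_cast (hJ.subset k).trans sdiff_subset)
    | cast l =>
      induction k using Fin.lastCases with
      | last => exact absurd hkl (not_le.2 (Fin.castSucc_lt_last l))
      | cast k => simpa using hJ.monotone_closure (Fin.castSucc_le_castSucc_iff.1 hkl)

end IsRainbowFlag

lemma eRk_comap_le_eRank {α : Type*} (M : Matroid α) (S : ι → α) (X : Set ι) :
    (M.comap S).eRk X ≤ M.eRank :=
  eRk_le_iff.2 fun _ _ hI ↦ hI.2.encard_image ▸ hI.1.encard_le_eRank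

variable [DecidableEq ι] [DecidableEq κ]

lemma exists_subset_union_eRk_add_lt_of_erase {X : Finset ι} {Cx Cy : Finset κ} {x y : ι}
    {d : ℕ} (hxy : x ≠ y) (hc : c x = c y) (hxC : c x ∈ Cx) (hyC : c y ∈ Cy)
    (hCx : N.eRk ↑{i ∈ X.erase x | c i ∈ Cx} + d < #Cx)
    (hCy : N.eRk ↑{i ∈ X.erase y | c i ∈ Cy} + d < #Cy) :
    ∃ C ⊆ Cx ∪ Cy, N.eRk ↑{i ∈ X | c i ∈ C} + d < #C := by
  set A : Set ι := ↑{i ∈ X.erase x | c i ∈ Cx}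
  set B : Set ι := ↑{i ∈ X.erase y | c i ∈ Cy}
  have hunion : (↑{i ∈ X | c i ∈ Cx ∪ Cy} : Set ι) ⊆ A ∪ B := by
    intro i
    simp only [A, B, coe_filter, mem_erase, mem_union, Set.mem_union, Set.mem_ofPred_eq]
    grind
  have hinter : (↑{i ∈ X | c i ∈ (Cx ∩ Cy).erase (c x)} : Set ι) ⊆ A ∩ B := by
    intro i
    simp only [A, B, coe_filter, mem_erase, mem_inter, Set.mem_inter_iff, Set.mem_ofPred_eq]
    grind
  have hcard : #(Cx ∪ Cy) + #((Cx ∩ Cy).erase (c x)) + 1 = #Cx + #Cy := by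
    have hx : c x ∈ Cx ∩ Cy := mem_inter.2 ⟨hxC, hc ▸ hyC⟩
    rw [card_erase_of_mem hx, ← card_union_add_card_inter]
    have := card_pos.2 ⟨_, hx⟩
    omega
  by_contra! h
  have hU := (h _ subset_rfl).trans (add_le_add (N.eRk_mono hunion) le_rfl)
  have hI := (h _ ((erase_subset _ _).trans inter_subset_union)).trans
    (add_le_add (N.eRk_mono hinter) le_rfl)
  have hsub := N.eRk_inter_add_eRk_union_le A B
  have hfin : ∀ Y ⊆ A ∪ B, N.eRk Y ≠ ⊤ := fun Y hY ↦
    eRk_ne_top_iff.2 (N.isRkFinite_of_finite (((finite_toSet _).union (finite_toSet _)).subset hY))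
  lift N.eRk (A ∩ B) to ℕ using
    hfin _ (Set.inter_subset_left.trans Set.subset_union_left) with p
  lift N.eRk (A ∪ B) to ℕ using hfin _ subset_rfl with q
  generalize N.eRk A = a, N.eRk B = b at *
  enat_to_nat
  omega

/-- Rado's theorem with deficiency `d`. -/
theorem exists_rainbow_indep_of_forall_card_le (X : Finset ι) {T : Finset κ} {d : ℕ}
    (h : ∀ C ⊆ T, (#C : ℕ∞) ≤ N.eRk ↑{i ∈ X | c i ∈ C} + d) :
    ∃ E ⊆ X, Set.InjOn c E ∧ N.Indep E ∧ #T ≤ #E + d := by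
  induction X using Finset.strongInduction with
  | H X ih =>
  by_cases hX : Set.InjOn c X
  · obtain ⟨E, hE⟩ := (N.isRkFinite_of_finite X.finite_toSet).exists_finset_isBasis'
    refine ⟨E, by exact_mod_cast hE.subset, hX.mono hE.subset, hE.indep, ?_⟩
    have := (h T subset_rfl).trans
      (add_le_add (N.eRk_mono (coe_subset.2 (filter_subset _ X))) le_rfl)
    rw [← hE.encard_eq_eRk, Set.encard_coe_eq_coe_finsetCard] at this
    exact_mod_cast this
  by_contra! hE
  have hdef : ∀ z ∈ X,
      ∃ C ⊆ T, c z ∈ C ∧ N.eRk ↑{i ∈ X.erase z | c i ∈ C} + d < #C := by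
    intro z hz
    by_contra! hz'
    obtain ⟨E, hEX, hEc, hEi, hTE⟩ := ih _ (erase_ssubset hz) fun C hC ↦ by
      by_cases hzC : c z ∈ C
      · exact hz' C hC hzC
      · rw [filter_erase, erase_eq_of_notMem (s := {i ∈ X | c i ∈ C})
          fun hz ↦ hzC (mem_filter.1 hz).2]
        exact h C hC
    exact (hE E (hEX.trans (erase_subset z X)) hEc hEi).not_ge hTE
  obtain ⟨x, hx, y, hy, hc, hxy⟩ : ∃ x ∈ X, ∃ y ∈ X, c x = c y ∧ x ≠ y := by
    simpa [Set.InjOn] using hX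
  obtain ⟨Cx, hCxT, hxC, hCx⟩ := hdef x hx
  obtain ⟨Cy, hCyT, hyC, hCy⟩ := hdef y hy
  obtain ⟨C, hC, hCd⟩ := exists_subset_union_eRk_add_lt_of_erase hxy hc hxC hyC hCx hCy
  exact (h C (hC.trans (union_subset hCxT hCyT))).not_gt hCd

lemma card_filter_le_card_filter_sdiff_add_one {X E : Finset ι} (hE : Set.InjOn c E) (j : κ) :
    #{i ∈ X | c i = j} ≤ #{i ∈ X \ E | c i = j} + 1 := by
  have hEj : #{i ∈ E | c i = j} ≤ 1 := card_le_one.2 fun a ha b hb ↦ by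
    rw [mem_filter] at ha hb
    exact hE ha.1 hb.1 (ha.2.trans hb.2.symm)
  calc #{i ∈ X | c i = j}
      ≤ #({i ∈ X \ E | c i = j} ∪ {i ∈ E | c i = j}) := card_le_card fun i ↦ by
        simp only [mem_filter, mem_union, mem_sdiff]; tauto
    _ ≤ #{i ∈ X \ E | c i = j} + 1 := (card_union_le _ _).trans (by omega)

lemma exists_lt_card_filter_sdiff {n : ℕ} {T : Finset κ} {X E : Finset ι}
    (hcount : ∀ j ∈ T, n + 1 ≤ #{i ∈ X | c i = j})
    (hrk : (∃ s ∈ T, n + 1 < #{i ∈ X | c i = s}) ∧ N.eRk X ≤ #T ∨ N.eRk X < #T)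
    (hEX : E ⊆ X) (hEc : Set.InjOn c E) (hEi : N.Indep E) :
    ∃ s ∈ T, n < #{i ∈ X \ E | c i = s} := by
  obtain ⟨⟨s, hsT, hs⟩, -⟩ | hrk := hrk
  · exact ⟨s, hsT, by have := card_filter_le_card_filter_sdiff_add_one (X := X) hEc s; omega⟩
  have hET : #(E.image c) < #T := by
    have := hEi.encard_le_eRk_of_subset (coe_subset.2 hEX)
    rw [Set.encard_coe_eq_coe_finsetCard] at this
    exact (card_image_le).trans_lt (by exact_mod_cast this.trans_lt hrk)
  obtain ⟨s, hsT, hsE⟩ := exists_mem_notMem_of_card_lt_card hET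
  have hXE : {i ∈ X \ E | c i = s} = {i ∈ X | c i = s} := by
    ext i
    simp only [mem_filter, mem_sdiff]
    exact ⟨fun h ↦ ⟨h.1.1, h.2⟩,
      fun h ↦ ⟨⟨h.1, fun hiE ↦ hsE (h.2 ▸ mem_image_of_mem c hiE)⟩, h.2⟩⟩
  exact ⟨s, hsT, hXE ▸ hcount s hsT⟩

theorem exists_isRainbowFlag (n : ℕ) {T : Finset κ} {X : Finset ι}
    (hXT : ∀ i ∈ X, c i ∈ T)
    (hcount : ∀ j ∈ T, n ≤ #{i ∈ X | c i = j})
    (hrk : (∃ s ∈ T, n < #{i ∈ X | c i = s}) ∧ N.eRk X ≤ #T ∨ 0 < n ∧ N.eRk X < #T) :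
    ∃ J : Fin (n + 1) → Finset ι, N.IsRainbowFlag c X J ∧ (J 0).Nonempty := by
  induction n generalizing T X with
  | zero =>
    obtain ⟨⟨s, -, hs⟩, -⟩ | ⟨⟨⟩, -⟩ := hrk
    obtain ⟨x, hx⟩ := card_pos.1 hs
    exact ⟨_, isRainbowFlag_singleton (mem_filter.1 hx).1, singleton_nonempty x⟩
  | succ n ih =>
    induction T using Finset.strongInduction generalizing X with
    | H T ihT =>
    have hrkT : N.eRk X ≤ #T := hrk.elim (·.2) (·.2.le)
    obtain ⟨r, hr⟩ :=
      ENat.ne_top_iff_exists.1 (ne_top_of_le_ne_top (ENat.natCast_ne_top _) hrkT)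
    rw [← hr, Nat.cast_le] at hrkT
    by_cases htight : ∃ C ⊆ T, N.eRk ↑{i ∈ X | c i ∈ C} + ↑(#T - r) < #C
    · obtain ⟨C, hCT, hC⟩ := htight
      have hCT' : C ⊂ T := by
        refine Finset.ssubset_iff_subset_ne.2 ⟨hCT, ?_⟩
        rintro rfl
        rw [filter_true_of_mem hXT, ← hr] at hC
        norm_cast at hC
        omega
      have hfilter : ∀ j ∈ C, {i ∈ {i ∈ X | c i ∈ C} | c i = j} = {i ∈ X | c i = j} :=
        fun j hj ↦ by ext i; simp only [mem_filter]; grind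
      obtain ⟨J, hJ, hJ0⟩ := ihT C hCT' (X := {i ∈ X | c i ∈ C})
        (fun i hi ↦ (mem_filter.1 hi).2)
        (fun j hj ↦ hfilter j hj ▸ hcount j (hCT hj))
        (Or.inr ⟨n.succ_pos, lt_of_le_of_lt le_self_add hC⟩)
      exact ⟨J, hJ.mono (filter_subset _ X), hJ0⟩
    · push Not at htight
      obtain ⟨E, hEX, hEc, hEi, hTE⟩ := exists_rainbow_indep_of_forall_card_le X htight
      have hE : N.IsBasis' E X := hEi.isBasis'_of_eRk_ge E.finite_toSet (coe_subset.2 hEX) (by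
        rw [← hr, hEi.eRk_eq_encard, Set.encard_coe_eq_coe_finsetCard, Nat.cast_le]
        omega)
      obtain ⟨J, hJ, hJ0⟩ := ih (T := T) (X := X \ E) (fun i hi ↦ hXT i (mem_sdiff.1 hi).1)
        (fun j hj ↦ Nat.le_of_add_le_add_right
          ((hcount j hj).trans (card_filter_le_card_filter_sdiff_add_one hEc j)))
        (Or.inl ⟨exists_lt_card_filter_sdiff hcount (hrk.imp_right (·.2)) hEX hEc hEi,
          (N.eRk_mono (coe_subset.2 sdiff_subset)).trans (hr ▸ Nat.cast_le.2 hrkT)⟩)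
      exact ⟨Fin.snoc J E, hJ.snoc hE hEc, by
        show (Fin.snoc (α := fun _ ↦ Finset ι) J E (Fin.castSucc 0)).Nonempty
        rwa [Fin.snoc_castSucc]⟩

end Matroid

open Finset in
/-- Colorful matroidal Tverberg, special version: `m` colors, the first color used at
least `r` times, each other color at least `r - 1` times. -/
theorem colorful_matroidal_tverberg_special {α ι : Type*} [Fintype ι] [DecidableEq ι]
    (M : Matroid α) (m r : ℕ) (hr : 1 ≤ r) (hm : 0 < m)
    (B : Set α) (hB : M.IsBase B) (hBfin : B.Finite) (hBm : B.ncard = m)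
    (S : ι → α) (hS : ∀ i, S i ∈ M.E) (hS' : ∀ i, S i ∉ M.closure ∅)
    (c : ι → Fin m)
    (hc₀ : r ≤ (univ.filter fun i => c i = ⟨0, hm⟩).card)
    (hc : ∀ col : Fin m, col ≠ ⟨0, hm⟩ →
      r - 1 ≤ (univ.filter fun i => c i = col).card) :
    ∃ J : Fin r → Finset ι,
      (∀ i j, i ≠ j → Disjoint (J i) (J j)) ∧
      (∀ k : Fin r, Set.InjOn c (J k : Set ι)) ∧
      M.closure ∅ ⊂ M.closure (S '' (J ⟨0, hr⟩ : Set ι)) ∧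
      (∀ i j : Fin r, i ≤ j →
        M.closure (S '' (J i : Set ι)) ⊆ M.closure (S '' (J j : Set ι))) := by
  obtain ⟨n, rfl⟩ : ∃ n, r = n + 1 := ⟨r - 1, by omega⟩
  have hrk : (M.comap S).eRk ↑(univ : Finset ι) ≤ #(univ : Finset (Fin m)) := by
    rw [card_univ, Fintype.card_fin, ← hBm, hBfin.cast_ncard_eq, hB.encard_eq_eRank]
    exact M.eRk_comap_le_eRank S _
  obtain ⟨J, hJ, x, hx⟩ := (M.comap S).exists_isRainbowFlag n (fun i _ ↦ mem_univ (c i))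
    (fun j _ ↦ if hj : j = ⟨0, hm⟩ then hj ▸ (Nat.le_succ n).trans hc₀ else hc j hj)
    (Or.inl ⟨⟨⟨0, hm⟩, mem_univ _, hc₀⟩, hrk⟩)
  refine ⟨J, hJ.pairwise_disjoint, hJ.injOn, ?_, fun k l hkl ↦ ?_⟩
  · refine Set.ssubset_iff_of_subset (M.closure_mono (Set.empty_subset _)) |>.2
      ⟨S x, M.mem_closure_of_mem' (Set.mem_image_of_mem S hx) (hS x), hS' x⟩
  · have hJk : S '' J k ⊆ M.E := Set.image_subset_iff.2 fun i _ ↦ hS i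
    rw [Matroid.closure_subset_closure_iff_subset_closure hJk, Set.image_subset_iff,
      ← Matroid.comap_closure_eq]
    exact ((M.comap S).subset_closure _ fun i _ ↦ hS i).trans (hJ.monotone_closure hkl)
end

section
/- For every r ≥ 1 and every matroid M of finite rank m ≥ 1 (with at least one basis consisting of non-loops), there exists a sequence S of non-loop elements of M with |S| = m(r-1) such that for every partition of S into r pairwise disjoint subsequences S_1, …, S_r one has ⋂_{i=1}^r cl(S_i) = cl(∅). -/
/-!
Repeat every element of a base `B = {b₁, …, bₘ}` exactly `r - 1` times. Each part `Sₖ` of a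
partition is then a subset of the independent set `B`, and for subsets of one independent set
closure commutes with intersection, so `⋂ cl(Sₖ) = cl(⋂ Sₖ)`. An element lying in all `r`
parts would need `r` distinct positions among its `r - 1` repetitions, so `⋂ Sₖ = ∅`.
-/

open Function

/-- Pigeonhole: `g` separates the points of each fibre of `f`, so a fibre meets fewer than
`card κ` of the disjoint parts. -/
theorem Set.iInter_image_eq_empty_of_injective_prodMk {ι κ β γ : Type*} [Fintype κ] [Fintype γ]
    {f : ι → β} {g : ι → γ} (hfg : Injective fun i ↦ (f i, g i))
    (hcard : Fintype.card γ < Fintype.card κ) {J : κ → Set ι} (hJ : Pairwise (Disjoint on J)) :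
    ⋂ k, f '' J k = ∅ := by
  refine Set.eq_empty_of_forall_notMem fun x hx ↦ ?_
  choose i hiJ hix using Set.mem_iInter.mp hx
  have hinj : Injective (g ∘ i) := by
    intro k k' hg
    by_contra hne
    have hi : i k = i k' := hfg (Prod.ext ((hix k).trans (hix k').symm) hg)
    exact Set.disjoint_left.mp (hJ hne) (hiJ k) (hi ▸ hiJ k')
  exact hcard.not_ge (Fintype.card_le_of_injective _ hinj)

theorem matroidal_tverberg_tight_general {α : Type*} (M : Matroid α) (m r : ℕ)
    (hr : 1 ≤ r)
    (B : Set α) (hB : M.IsBase B) (hBfin : B.Finite) (hBm : B.ncard = m)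
    (hBnl : ∀ x ∈ B, x ∉ M.closure ∅) :
    ∃ S : Fin (m * (r - 1)) → α,
      (∀ i, S i ∈ M.E ∧ S i ∉ M.closure ∅) ∧
      ∀ J : Fin r → Finset (Fin (m * (r - 1))),
        (∀ i j, i ≠ j → Disjoint (J i) (J j)) →
        (∀ i : Fin (m * (r - 1)), ∃ k, i ∈ J k) →
        (⋂ k : Fin r, M.closure (S '' (J k : Set (Fin (m * (r - 1)))))) =
          M.closure ∅ := by
  have := hBfin.to_subtype
  have : Nonempty (Fin r) := ⟨⟨0, hr⟩⟩
  let b : Fin m ≃ B := (Finite.equivFinOfCardEq hBm).symm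
  let e : Fin m × Fin (r - 1) ≃ Fin (m * (r - 1)) := finProdFinEquiv
  refine ⟨fun i ↦ b (e.symm i).1, fun i ↦ ⟨hB.subset_ground (b _).2, hBnl _ (b _).2⟩, ?_⟩
  intro J hJ _
  have hsub : ∀ k, (fun i ↦ (b (e.symm i).1 : α)) '' J k ⊆ B := by
    rintro k _ ⟨i, -, rfl⟩
    exact (b _).2
  have hsep : Injective fun i ↦ ((b (e.symm i).1 : α), (e.symm i).2) := fun i j h ↦
    e.symm.injective <| Prod.ext (b.injective <| Subtype.ext congr($h.1)) congr($h.2)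
  have hcard : Fintype.card (Fin (r - 1)) < Fintype.card (Fin r) := by
    simp only [Fintype.card_fin]
    omega
  rw [← hB.indep.closure_iInter_eq_biInter_closure_of_forall_subset hsub,
    Set.iInter_image_eq_empty_of_injective_prodMk hsep hcard
      fun k k' hne ↦ Finset.disjoint_coe.mpr (hJ k k' hne)]

/-- Tightness: there is a sequence of `m (r-1)` non-loops such that every partition into
`r` disjoint subsequences has `⋂ cl(Sᵢ) = cl(∅)`. -/
theorem matroidal_tverberg_tight {α : Type*} (M : Matroid α) (m r : ℕ)
    (hr : 1 ≤ r) (hm : 1 ≤ m)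
    (B : Set α) (hB : M.IsBase B) (hBfin : B.Finite) (hBm : B.ncard = m)
    (hBnl : ∀ x ∈ B, x ∉ M.closure ∅) :
    ∃ S : Fin (m * (r - 1)) → α,
      (∀ i, S i ∈ M.E ∧ S i ∉ M.closure ∅) ∧
      ∀ J : Fin r → Finset (Fin (m * (r - 1))),
        (∀ i j, i ≠ j → Disjoint (J i) (J j)) →
        (∀ i : Fin (m * (r - 1)), ∃ k, i ∈ J k) →
        (⋂ k : Fin r, M.closure (S '' (J k : Set (Fin (m * (r - 1)))))) =
          M.closure ∅ :=
  matroidal_tverberg_tight_general M m r hr B hB hBfin hBm hBnl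
end

section
/- Let S be a sequence of m(r-1) points in ℝ^{m-1} obtained by repeating each of m affinely independent points e_1, …, e_m exactly (r-1) times. Then for every partition of S into r pairwise disjoint subsequences S_1, …, S_r, the intersection ⋂_{i=1}^r aff(S_i) is empty. -/
/-!
Every part `S_k` is a subfamily `e '' T_k` of the affinely independent family `e`, and spans of
subfamilies of an affinely independent family intersect exactly in the span of the common
subfamily, so `⋂ k, aff S_k = aff (e '' ⋂ k, T_k)`. By pigeonhole, the `r - 1` copies of `e_j` lie
in at most `r - 1` of the `r` disjoint parts, so no index `j` lies in every `T_k`.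
-/

theorem AffineIndependent.inf'_affineSpan_eq_affineSpan_biInter {k V P ι κ : Type*}
    [Ring k] [Nontrivial k] [AddCommGroup V] [Module k V] [AddTorsor V P] {p : ι → P}
    (ha : AffineIndependent k p) (s : κ → Set ι) {t : Finset κ} (ht : t.Nonempty) :
    t.inf' ht (fun j ↦ affineSpan k (p '' s j)) = affineSpan k (p '' ⋂ j ∈ t, s j) := by
  classical
  induction ht using Finset.Nonempty.cons_induction with
  | singleton j => simp
  | cons j t hj ht ih =>
    rw [Finset.inf'_cons ht, ih, ha.inf_affineSpan_eq_affineSpan_inter, Finset.cons_eq_insert,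
      Finset.set_biInter_insert]

theorem AffineIndependent.iInf_affineSpan_eq_affineSpan_iInter {k V P ι κ : Type*}
    [Ring k] [Nontrivial k] [AddCommGroup V] [Module k V] [AddTorsor V P] {p : ι → P}
    (ha : AffineIndependent k p) [Fintype κ] [Nonempty κ] (s : κ → Set ι) :
    ⨅ j, affineSpan k (p '' s j) = affineSpan k (p '' ⋂ j, s j) := by
  simpa [Finset.inf'_eq_inf, Finset.inf_univ_eq_iInf] using
    ha.inf'_affineSpan_eq_affineSpan_biInter s Finset.univ_nonempty

theorem Set.iInter_image_fst_eq_empty_of_card_lt {α β κ : Type*} [Fintype β] [Fintype κ]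
    (J : κ → Set (α × β)) (hJ : Pairwise (Function.onFun Disjoint J))
    (hcard : Fintype.card β < Fintype.card κ) : ⋂ j, Prod.fst '' J j = ∅ := by
  by_contra hne
  obtain ⟨a, ha⟩ := Set.nonempty_iff_ne_empty.mpr hne
  choose b hb using fun j ↦ (Set.mem_iInter.mp ha j)
  have hinj : Function.Injective fun j ↦ (b j).2 := by
    intro i j hij
    by_contra hij_ne
    refine Set.disjoint_left.mp (hJ hij_ne) (hb i).1 ?_
    rw [Prod.ext_iff.mpr ⟨(hb i).2.trans (hb j).2.symm, hij⟩]
    exact (hb j).1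
  exact hcard.not_ge (Fintype.card_le_of_injective _ hinj)

theorem affine_tverberg_tight_general (m r : ℕ) (hr : 1 ≤ r)
    (e : Fin m → (Fin (m - 1) → ℝ)) (he : AffineIndependent ℝ e)
    (S : Fin m × Fin (r - 1) → (Fin (m - 1) → ℝ)) (hSe : ∀ p, S p = e p.1) :
    ∀ J : Fin r → Finset (Fin m × Fin (r - 1)),
      (∀ i j, i ≠ j → Disjoint (J i) (J j)) →
      (∀ p : Fin m × Fin (r - 1), ∃ k, p ∈ J k) →
      (⋂ k : Fin r,
        (affineSpan ℝ (S '' (J k : Set (Fin m × Fin (r - 1)))) :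
          Set (Fin (m - 1) → ℝ))) = ∅ := by
  intro J hdisj _
  have : Nonempty (Fin r) := Fin.pos_iff_nonempty.mp hr
  have hS : S = e ∘ Prod.fst := funext hSe
  have hno_common : ⋂ k, Prod.fst '' (J k : Set (Fin m × Fin (r - 1))) = ∅ :=
    Set.iInter_image_fst_eq_empty_of_card_lt _
      (fun i j hij ↦ Finset.disjoint_coe.mpr (hdisj i j hij))
      (by simp only [Fintype.card_fin]; omega)
  simp_rw [hS, Set.image_comp, ← AffineSubspace.coe_iInf,
    he.iInf_affineSpan_eq_affineSpan_iInter, hno_common, Set.image_empty, AffineSubspace.span_empty,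
    AffineSubspace.bot_coe]

/-- Tightness for affine hulls: repeating each of `m` affinely independent points of
`ℝ^{m-1}` exactly `r - 1` times yields a sequence of `m (r-1)` points such that every
partition into `r` disjoint subsequences has empty intersection of affine hulls. -/
theorem affine_tverberg_tight (m r : ℕ) (hr : 1 ≤ r) (hm : 1 ≤ m)
    (e : Fin m → (Fin (m - 1) → ℝ)) (he : AffineIndependent ℝ e)
    (S : Fin m × Fin (r - 1) → (Fin (m - 1) → ℝ)) (hSe : ∀ p, S p = e p.1) :
    ∀ J : Fin r → Finset (Fin m × Fin (r - 1)),
      (∀ i j, i ≠ j → Disjoint (J i) (J j)) →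
      (∀ p : Fin m × Fin (r - 1), ∃ k, p ∈ J k) →
      (⋂ k : Fin r,
        (affineSpan ℝ (S '' (J k : Set (Fin m × Fin (r - 1)))) :
          Set (Fin (m - 1) → ℝ))) = ∅ :=
  affine_tverberg_tight_general m r hr e he S hSe
end

section
/- Let M be a matroid with closure operator cl and let x be a non-loop element with x ∈ cl(U) ∩ cl(V), where U, V are subsets of a common independent set B. If U' ⊆ U and V' ⊆ V are inclusion-minimal with x ∈ cl(U') and x ∈ cl(V'), then U' = V'. -/
open Set

private lemma subset_aux {α : Type*} (M : Matroid α)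
    (B U' V' : Set α) (hB : M.Indep B) (hU'B : U' ⊆ B) (hV'B : V' ⊆ B)
    (x : α) (hxU' : x ∈ M.closure U')
    (hU'min : ∀ W ⊆ U', x ∈ M.closure W → W = U')
    (hxV' : x ∈ M.closure V') : U' ⊆ V' := by
  intro y hyU'
  by_contra hyV'
  set C := (U' ∪ V') \ {y} with hC
  have hIndep : M.Indep (U' ∪ V') := hB.subset (union_subset hU'B hV'B)
  have hVC : V' ⊆ C := fun z hz => ⟨Or.inr hz, fun h => hyV' (h ▸ hz)⟩
  have hUC : U' \ {y} ⊆ C := diff_subset_diff_left subset_union_left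
  have hxC : x ∈ M.closure C := M.closure_subset_closure hVC hxV'
  have hnot : x ∉ M.closure (U' \ {y}) := by
    intro h
    have := hU'min _ diff_subset h
    exact (this ▸ hyU').2 rfl
  have hins : insert y (U' \ {y}) = U' := insert_diff_singleton.trans
    (insert_eq_of_mem hyU')
  have hx' : x ∈ M.closure (insert y (U' \ {y})) \ M.closure (U' \ {y}) :=
    ⟨by rw [hins]; exact hxU', hnot⟩
  have hy : y ∈ M.closure (insert x (U' \ {y})) := (Matroid.closure_exchange hx').1
  have hy2 : y ∈ M.closure (insert x C) :=
    M.closure_subset_closure (insert_subset_insert hUC) hy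
  rw [M.closure_insert_eq_of_mem_closure hxC] at hy2
  exact hIndep.notMem_closure_diff_of_mem (Or.inl hyU') hy2

/-- If `x` is a non-loop in `cl(U) ∩ cl(V)` with `U, V` subsets of a common independent
set, then the inclusion-minimal subsets `U' ⊆ U`, `V' ⊆ V` with `x` in their closures
coincide. -/
theorem minimal_closure_witness_unique {α : Type*} (M : Matroid α)
    (B U V U' V' : Set α) (hB : M.Indep B) (hU : U ⊆ B) (hV : V ⊆ B)
    (x : α) (hx : x ∉ M.closure ∅)
    (hxU : x ∈ M.closure U) (hxV : x ∈ M.closure V)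
    (hU' : U' ⊆ U) (hxU' : x ∈ M.closure U')
    (hU'min : ∀ W ⊆ U', x ∈ M.closure W → W = U')
    (hV' : V' ⊆ V) (hxV' : x ∈ M.closure V')
    (hV'min : ∀ W ⊆ V', x ∈ M.closure W → W = V') :
    U' = V' := by
  have hU'B := hU'.trans hU
  have hV'B := hV'.trans hV
  exact Set.Subset.antisymm
    (subset_aux M B U' V' hB hU'B hV'B x hxU' hU'min hxV')
    (subset_aux M B V' U' hB hV'B hU'B x hxV' hV'min hxU')
end
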